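/- Let K satisfy 0 ≤ K(x,y) = K(y,x) ≤ κ(1+x)(1+y) for all (x,y) ∈ (0,∞)² and some κ > 0, let f^in ∈ L¹₁(0,∞) with f^in ≥ 0 a.e., let n ≥ 1, K_n := min{K, n}, and let f_n ∈ C¹([0,∞); L¹(0,∞)) be the unique non-negative global solution of Smoluchowski's coagulation equation with kernel K_n and initial condition f^in, which satisfies ‖f_n(t)‖_{1,1} ≤ ‖f^in‖_{1,1} for all t ≥ 0. Then ‖f_n(t) − f_n(s)‖_{L¹} ≤ (3κ/2)·‖f^in‖²_{1,1}·(t − s) for all 0 ≤ s ≤ t and all n ≥ 1. -/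

import Mathlib

/-!
Along the flow, `‖∂ₜ f_n‖_{L¹} = ‖coagRHS K_n f_n‖_{L¹}`, and the growth bound
`K_n(x,y) ≤ κ (1+x)(1+y)` controls both terms of the right-hand side by the weighted mass
`w = (1+x)|f_n|`: the gain term by `κ/2 · (w ⋆ w)` and the loss term by `κ · ‖w‖₁ · w`.
Since `‖w ⋆ w‖₁ = ‖w‖₁²` and `‖w‖₁ = ‖f_n(t)‖_{1,1} ≤ ‖f^in‖_{1,1}`, the time derivative is
bounded by `(3κ/2) ‖f^in‖²_{1,1}` in `L¹`, and the mean value inequality concludes.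
-/

open MeasureTheory Filter Topology

noncomputable section

/-- Lebesgue measure on the size space `(0,∞)`. -/
def μplus : Measure ℝ := volume.restrict (Set.Ioi (0:ℝ))

/-- The right-hand side of Smoluchowski's coagulation equation with kernel `K`. -/
def coagRHS (K : ℝ → ℝ → ℝ) (f : ℝ → ℝ) (x : ℝ) : ℝ :=
  (1/2) * (∫ y in Set.Ioo (0:ℝ) x, K y (x - y) * f y * f (x - y)) -
    f x * ∫ y in Set.Ioi (0:ℝ), K x y * f y

/-- A solution `f ∈ C¹([0,∞); L¹(0,∞))` of Smoluchowski's coagulation equation with kernel `K`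
and initial condition `f^in`, viewed as a differential equation in the Banach space `L¹(0,∞)`. -/
def IsC1L1Solution (K : ℝ → ℝ → ℝ) (fin : ℝ → ℝ)
    (F F' : ℝ → Lp ℝ 1 μplus) : Prop :=
  (∀ t ∈ Set.Ici (0:ℝ), HasDerivWithinAt F (F' t) (Set.Ici 0) t) ∧
  ContinuousOn F' (Set.Ici 0) ∧
  (∀ t ∈ Set.Ici (0:ℝ), (F' t : ℝ → ℝ) =ᵐ[μplus] coagRHS K (F t)) ∧
  (F 0 : ℝ → ℝ) =ᵐ[μplus] fin

open Set
open scoped ENNReal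

section LConvolution

variable {G : Type*} [MeasurableSpace G] [AddGroup G] [MeasurableAdd₂ G] [MeasurableNeg G]
  {μ : Measure G} [μ.IsAddLeftInvariant] [SFinite μ]

theorem lintegral_lconvolution {f g : G → ℝ≥0∞} (hf : Measurable f) (hg : Measurable g) :
    ∫⁻ x, (f ⋆ₗ[μ] g) x ∂μ = (∫⁻ x, f x ∂μ) * ∫⁻ x, g x ∂μ := by
  simp only [lconvolution_def]
  rw [lintegral_lintegral_swap (by fun_prop), ← lintegral_mul_const _ hf]
  refine lintegral_congr fun y => ?_
  rw [lintegral_const_mul _ (by fun_prop), lintegral_add_left_eq_self g]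

end LConvolution

theorem lconvolution_indicator_Ioi (g h : ℝ → ℝ≥0∞) (x : ℝ) :
    ((Ioi 0).indicator g ⋆ₗ (Ioi 0).indicator h) x = ∫⁻ y in Ioo 0 x, g y * h (x - y) := by
  rw [lconvolution_def, ← lintegral_indicator measurableSet_Ioo]
  refine lintegral_congr fun y => ?_
  simp only [indicator_apply, mem_Ioo, mem_Ioi, neg_add_eq_sub, sub_pos]
  split_ifs <;> simp_all

theorem lintegral_Ioi_lintegral_Ioo_mul_sub_le {g h : ℝ → ℝ≥0∞} (hg : Measurable g)
    (hh : Measurable h) :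
    ∫⁻ x in Ioi 0, ∫⁻ y in Ioo 0 x, g y * h (x - y) ≤
      (∫⁻ x in Ioi 0, g x) * ∫⁻ x in Ioi 0, h x := by
  simp_rw [← lconvolution_indicator_Ioi]
  calc _ ≤ ∫⁻ x, ((Ioi 0).indicator g ⋆ₗ (Ioi 0).indicator h) x := setLIntegral_le_lintegral _ _
    _ = _ := by
      rw [lintegral_lconvolution (hg.indicator measurableSet_Ioi) (hh.indicator measurableSet_Ioi),
        lintegral_indicator measurableSet_Ioi, lintegral_indicator measurableSet_Ioi]

def weightedAbs (f : ℝ → ℝ) (x : ℝ) : ℝ≥0∞ := ENNReal.ofReal ((1 + x) * |f x|)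

theorem ae_nonneg_one_add_mul_abs (f : ℝ → ℝ) : 0 ≤ᵐ[μplus] fun x => (1 + x) * |f x| :=
  (ae_restrict_mem measurableSet_Ioi).mono fun x hx =>
    mul_nonneg (by linarith [mem_Ioi.1 hx]) (abs_nonneg _)

section KernelBound

variable {K : ℝ → ℝ → ℝ} {κ : ℝ} (hκ : 0 ≤ κ)
  (hK : ∀ x ∈ Ioi (0:ℝ), ∀ y ∈ Ioi (0:ℝ), |K x y| ≤ κ * (1 + x) * (1 + y))
include hκ hK

theorem enorm_kernel_mul_mul_le (f : ℝ → ℝ) {a b : ℝ} (ha : 0 < a) (hb : 0 < b) :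
    ‖K a b * f a * f b‖ₑ ≤ ENNReal.ofReal κ * (weightedAbs f a * weightedAbs f b) := by
  rw [Real.enorm_eq_ofReal_abs, weightedAbs, weightedAbs,
    ← ENNReal.ofReal_mul (mul_nonneg (by linarith) (abs_nonneg _)), ← ENNReal.ofReal_mul hκ]
  refine ENNReal.ofReal_le_ofReal ?_
  calc |K a b * f a * f b| = |K a b| * |f a| * |f b| := by rw [abs_mul, abs_mul]
    _ ≤ κ * (1 + a) * (1 + b) * |f a| * |f b| := by gcongr; exact hK a ha b hb
    _ = κ * ((1 + a) * |f a| * ((1 + b) * |f b|)) := by ring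

theorem enorm_coag_gain_le (f : ℝ → ℝ) (x : ℝ) :
    ‖∫ y in Ioo 0 x, K y (x - y) * f y * f (x - y)‖ₑ ≤
      ENNReal.ofReal κ * ∫⁻ y in Ioo 0 x, weightedAbs f y * weightedAbs f (x - y) :=
  calc _ ≤ ∫⁻ y in Ioo 0 x, ‖K y (x - y) * f y * f (x - y)‖ₑ := enorm_integral_le_lintegral_enorm _
    _ ≤ ∫⁻ y in Ioo 0 x, ENNReal.ofReal κ * (weightedAbs f y * weightedAbs f (x - y)) :=
      setLIntegral_mono' measurableSet_Ioo fun _ hy =>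
        enorm_kernel_mul_mul_le hκ hK f hy.1 (sub_pos.2 hy.2)
    _ = _ := lintegral_const_mul' _ _ ENNReal.ofReal_ne_top

theorem enorm_coag_loss_le (f : ℝ → ℝ) {x : ℝ} (hx : 0 < x) :
    ‖f x * ∫ y in Ioi 0, K x y * f y‖ₑ ≤
      ENNReal.ofReal κ * weightedAbs f x * ∫⁻ y in Ioi 0, weightedAbs f y :=
  calc _ = ‖∫ y in Ioi 0, K x y * f x * f y‖ₑ := by
        rw [← integral_const_mul]; congr 2 with y; ring
    _ ≤ ∫⁻ y in Ioi 0, ‖K x y * f x * f y‖ₑ := enorm_integral_le_lintegral_enorm _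
    _ ≤ ∫⁻ y in Ioi 0, ENNReal.ofReal κ * (weightedAbs f x * weightedAbs f y) :=
      setLIntegral_mono' measurableSet_Ioi fun y hy => enorm_kernel_mul_mul_le hκ hK f hx hy
    _ = _ := by
      rw [lintegral_const_mul' _ _ ENNReal.ofReal_ne_top,
        lintegral_const_mul' (weightedAbs f x) _ ENNReal.ofReal_ne_top, mul_assoc]

theorem enorm_coagRHS_le (f : ℝ → ℝ) {x : ℝ} (hx : 0 < x) :
    ‖coagRHS K f x‖ₑ ≤
      2⁻¹ * ENNReal.ofReal κ * (∫⁻ y in Ioo 0 x, weightedAbs f y * weightedAbs f (x - y)) +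
        ENNReal.ofReal κ * weightedAbs f x * ∫⁻ y in Ioi 0, weightedAbs f y :=
  calc ‖coagRHS K f x‖ₑ
      ≤ ‖(1 / 2 : ℝ) * ∫ y in Ioo 0 x, K y (x - y) * f y * f (x - y)‖ₑ +
          ‖f x * ∫ y in Ioi 0, K x y * f y‖ₑ := enorm_sub_le
    _ = 2⁻¹ * ‖∫ y in Ioo 0 x, K y (x - y) * f y * f (x - y)‖ₑ +
          ‖f x * ∫ y in Ioi 0, K x y * f y‖ₑ := by
        rw [enorm_mul, show ‖(1 / 2 : ℝ)‖ₑ = 2⁻¹ by simp [Real.enorm_eq_ofReal_abs]]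
    _ ≤ _ := by
        rw [mul_assoc]
        exact add_le_add (mul_le_mul_right (enorm_coag_gain_le hκ hK f x) _)
          (enorm_coag_loss_le hκ hK f hx)

theorem lintegral_enorm_coagRHS_le {f : ℝ → ℝ} (hf : Measurable f) :
    ∫⁻ x, ‖coagRHS K f x‖ₑ ∂μplus ≤
      ENNReal.ofReal (3 * κ / 2) * (∫⁻ x, weightedAbs f x ∂μplus) ^ 2 := by
  have hw : Measurable (weightedAbs f) := by unfold weightedAbs; fun_prop
  set J := ∫⁻ x in Ioi 0, weightedAbs f x
  have hconst : ENNReal.ofReal (3 * κ / 2) = 2⁻¹ * ENNReal.ofReal κ + ENNReal.ofReal κ := by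
    rw [show 3 * κ / 2 = 2⁻¹ * κ + κ by ring, ENNReal.ofReal_add (by positivity) hκ,
      ENNReal.ofReal_mul (by norm_num), ENNReal.ofReal_inv_of_pos two_pos, ENNReal.ofReal_ofNat]
  rw [μplus]
  calc _ ≤ ∫⁻ x in Ioi 0, (2⁻¹ * ENNReal.ofReal κ *
          (∫⁻ y in Ioo 0 x, weightedAbs f y * weightedAbs f (x - y)) +
            ENNReal.ofReal κ * weightedAbs f x * J) :=
        setLIntegral_mono' measurableSet_Ioi fun x hx => enorm_coagRHS_le hκ hK f hx
    _ = 2⁻¹ * ENNReal.ofReal κ *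
          (∫⁻ x in Ioi 0, ∫⁻ y in Ioo 0 x, weightedAbs f y * weightedAbs f (x - y)) +
            ENNReal.ofReal κ * J * J := by
        rw [lintegral_add_right _ ((hw.const_mul _).mul_const _),
          lintegral_const_mul' _ _ (by finiteness), lintegral_mul_const _ (hw.const_mul _),
          lintegral_const_mul' _ _ ENNReal.ofReal_ne_top]
    _ ≤ 2⁻¹ * ENNReal.ofReal κ * (J * J) + ENNReal.ofReal κ * J * J := by
        gcongr; exact lintegral_Ioi_lintegral_Ioo_mul_sub_le hw hw
    _ = _ := by rw [hconst]; ring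

theorem norm_le_of_ae_eq_coagRHS {u g : Lp ℝ 1 μplus} (hu : u =ᵐ[μplus] coagRHS K g)
    (hg : Integrable (fun x => (1 + x) * |g x|) μplus) :
    ‖u‖ ≤ 3 * κ / 2 * (∫ x, (1 + x) * |g x| ∂μplus) ^ 2 := by
  have hmass : ∫⁻ x, weightedAbs g x ∂μplus = ENNReal.ofReal (∫ x, (1 + x) * |g x| ∂μplus) :=
    (ofReal_integral_eq_lintegral_ofReal hg (ae_nonneg_one_add_mul_abs g)).symm
  rw [Lp.norm_def, eLpNorm_one_eq_lintegral_enorm, lintegral_congr_ae (hu.mono fun x hx => by rw [hx])]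
  refine ENNReal.toReal_le_of_le_ofReal (by positivity) ?_
  calc _ ≤ ENNReal.ofReal (3 * κ / 2) * (∫⁻ x, weightedAbs g x ∂μplus) ^ 2 :=
        lintegral_enorm_coagRHS_le hκ hK (Lp.stronglyMeasurable g).measurable
    _ = _ := by
        rw [hmass, ← ENNReal.ofReal_pow (integral_nonneg_of_ae (ae_nonneg_one_add_mul_abs g)),
          ← ENNReal.ofReal_mul (by positivity)]

end KernelBound

theorem time_equicontinuity_truncated_solutions
    (K : ℝ → ℝ → ℝ)
    (κ : ℝ) (hκ : 0 < κ)
    (hKbd : ∀ x ∈ Set.Ioi (0:ℝ), ∀ y ∈ Set.Ioi (0:ℝ),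
      0 ≤ K x y ∧ K x y ≤ κ * (1 + x) * (1 + y))
    (fin : ℝ → ℝ)
    (n : ℕ)
    (F F' : ℝ → Lp ℝ 1 μplus)
    (hsol : IsC1L1Solution (fun x y => min (K x y) (n : ℝ)) fin F F')
    (hmom : ∀ t ∈ Set.Ici (0:ℝ),
      Integrable (fun x => (1 + x) * |(F t : ℝ → ℝ) x|) μplus ∧
      ∫ x, (1 + x) * |(F t : ℝ → ℝ) x| ∂μplus ≤ ∫ x, (1 + x) * |fin x| ∂μplus)
    (s t : ℝ) (hs : 0 ≤ s) (hst : s ≤ t) :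
    ∫ x, |(F t : ℝ → ℝ) x - (F s : ℝ → ℝ) x| ∂μplus ≤
      (3 * κ / 2) * (∫ x, (1 + x) * |fin x| ∂μplus) ^ 2 * (t - s) := by
  obtain ⟨hderiv, -, hrhs, -⟩ := hsol
  have hKn : ∀ x ∈ Ioi (0:ℝ), ∀ y ∈ Ioi (0:ℝ), |min (K x y) (n : ℝ)| ≤ κ * (1 + x) * (1 + y) := by
    intro x hx y hy
    obtain ⟨hK0, hKle⟩ := hKbd x hx y hy
    rw [abs_of_nonneg (le_min hK0 n.cast_nonneg)]
    exact (min_le_left _ _).trans hKle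
  have hF' : ∀ τ ∈ Ici (0:ℝ), ‖F' τ‖ ≤ 3 * κ / 2 * (∫ x, (1 + x) * |fin x| ∂μplus) ^ 2 := by
    intro τ hτ
    refine (norm_le_of_ae_eq_coagRHS hκ.le hKn (hrhs τ hτ) (hmom τ hτ).1).trans ?_
    have hmass_nonneg := integral_nonneg_of_ae (ae_nonneg_one_add_mul_abs (F τ))
    exact mul_le_mul_of_nonneg_left (pow_le_pow_left₀ hmass_nonneg (hmom τ hτ).2 2) (by positivity)
  have hmvt := (convex_Ici 0).norm_image_sub_le_of_norm_hasDerivWithin_le hderiv hF' hs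
    (hs.trans hst)
  simp_rw [← Real.dist_eq]
  rw [← L1.dist_eq_integral_dist, dist_eq_norm]
  rwa [Real.norm_of_nonneg (sub_nonneg.2 hst)] at hmvt

end
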